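/- Let A be a complex Banach algebra (not necessarily unital) and let x ∈ A with ‖x‖ ≤ 1. The following are equivalent: (i) x is left quasi-invertible, i.e. there exists y ∈ A with y x = x + y; (ii) x is right quasi-invertible, i.e. there exists y ∈ A with x y = x + y; (iii) {a − x a : a ∈ A} = A; (iv) the norm closure of {a − x a : a ∈ A} equals A; (v) {a − a x : a ∈ A} = A; (vi) the norm closure of {a − a x : a ∈ A} equals A. -/

import Mathlib

/-!
Quasi-invertibility of `x` is one-sided invertibility of `1 - x` in the unitization `A⁺`, which
the ℓ¹ norm `‖(λ, a)‖ = ‖λ‖ + ‖a‖` makes a Banach algebra. As `‖x‖ ≤ 1`, the element `1 - x` is a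
limit of the units `1 - t • x`, `t < 1`. A one-sided invertible element `u`, say `v * u = 1`, in
the closure of the (open) group of units is a unit: for a unit `w` close to `u`, `v * w` is close
to `1`, hence a unit, so `v` and then `u = v⁻¹` are units. If `(1 - x)A` is dense, some `a` has
`‖x - (a - x * a)‖ < 1`, and then `(1 - x)(1 + a)` is a unit.
-/

section NormedRing

variable {R : Type*} [NormedRing R] [HasSummableGeomSeries R]

theorem IsUnit.of_mul_eq_one_right_of_mem_closure {u v : R} (h : v * u = 1)
    (hu : u ∈ closure {w : R | IsUnit w}) : IsUnit u := by
  have hopen : IsOpen {w : R | IsUnit (v * w)} := Units.isOpen.preimage (continuous_const_mul v)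
  obtain ⟨w, hvw, W, rfl⟩ := mem_closure_iff.mp hu _ hopen (by simp [h])
  obtain ⟨V, rfl⟩ := (Units.isUnit_mul_units v W).mp hvw
  exact Units.mul_eq_one_iff_inv_eq.mp h ▸ V⁻¹.isUnit

theorem IsUnit.of_mul_eq_one_of_mem_closure {u v : R} (h : u * v = 1)
    (hu : u ∈ closure {w : R | IsUnit w}) : IsUnit u := by
  have hopen : IsOpen {w : R | IsUnit (w * v)} := Units.isOpen.preimage (continuous_mul_const v)
  obtain ⟨w, hwv, W, rfl⟩ := mem_closure_iff.mp hu _ hopen (by simp [h])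
  obtain ⟨V, rfl⟩ := (Units.isUnit_units_mul W v).mp hwv
  exact Units.mul_eq_one_iff_eq_inv.mp h ▸ V⁻¹.isUnit

theorem one_sub_mem_closure_setOf_isUnit [NormedSpace ℝ R] {x : R} (hx : ‖x‖ ≤ 1) :
    1 - x ∈ closure {w : R | IsUnit w} := by
  have hcont : Continuous fun t : ℝ => 1 - t • x := by fun_prop
  refine mem_closure_of_tendsto
    ((hcont.tendsto' 1 _ (by simp)).mono_left (nhdsWithin_le_nhds (s := Set.Iio 1))) ?_
  filter_upwards [Ioo_mem_nhdsLT (zero_lt_one' ℝ)] with t ht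
  refine isUnit_one_sub_of_norm_lt_one ?_
  calc ‖t • x‖ = t * ‖x‖ := by rw [norm_smul, Real.norm_of_nonneg ht.1.le]
    _ ≤ t := mul_le_of_le_one_right ht.1.le hx
    _ < 1 := ht.2

end NormedRing

namespace Unitization

theorem eq_one_sub_inr_of_fst_eq_one {R A : Type*} [Ring R] [AddCommGroup A]
    {w : Unitization R A} (hw : w.fst = 1) : w = 1 - ((-w.snd : A) : Unitization R A) := by
  ext <;> simp [hw]

section Algebra

variable {R A : Type*} [CommRing R] [NonUnitalRing A] [Module R A] [IsScalarTower R A A]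
  [SMulCommClass R A A]

theorem one_sub_inr_mul_one_sub_inr_eq_one_iff (x y : A) :
    (1 - (x : Unitization R A)) * (1 - y) = 1 ↔ x * y = x + y := by
  have : (1 - (x : Unitization R A)) * (1 - y) = 1 - ↑(x + y - x * y) := by
    simp only [inr_sub, inr_add, inr_mul]
    noncomm_ring
  rw [this, sub_eq_self, ← inr_zero R, inr_injective.eq_iff, sub_eq_zero, eq_comm]

theorem exists_left_quasi_inverse_iff (x : A) :
    (∃ y : A, y * x = x + y) ↔ ∃ w : Unitization R A, w * (1 - x) = 1 := by
  constructor
  · rintro ⟨y, hy⟩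
    exact ⟨1 - y, (one_sub_inr_mul_one_sub_inr_eq_one_iff y x).2 (hy.trans (add_comm x y))⟩
  · rintro ⟨w, hw⟩
    have hfst : w.fst = 1 := by
      simpa only [map_mul, map_sub, map_one, fstHom_apply, fst_inr, sub_zero, mul_one, one_mul]
        using congrArg (fstHom R A) hw
    rw [eq_one_sub_inr_of_fst_eq_one hfst, one_sub_inr_mul_one_sub_inr_eq_one_iff] at hw
    exact ⟨_, hw.trans (add_comm _ _)⟩

theorem exists_right_quasi_inverse_iff (x : A) :
    (∃ y : A, x * y = x + y) ↔ ∃ w : Unitization R A, (1 - x) * w = 1 := by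
  constructor
  · rintro ⟨y, hy⟩
    exact ⟨1 - y, (one_sub_inr_mul_one_sub_inr_eq_one_iff x y).2 hy⟩
  · rintro ⟨w, hw⟩
    have hfst : w.fst = 1 := by
      simpa only [map_mul, map_sub, map_one, fstHom_apply, fst_inr, sub_zero, mul_one, one_mul]
        using congrArg (fstHom R A) hw
    rw [eq_one_sub_inr_of_fst_eq_one hfst, one_sub_inr_mul_one_sub_inr_eq_one_iff] at hw
    exact ⟨_, hw⟩

end Algebra

variable {A : Type*} [NonUnitalNormedRing A] [NormedSpace ℂ A] [IsScalarTower ℂ A A]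
  [SMulCommClass ℂ A A]

theorem isUnit_one_sub_inr_of_norm_lt_one [CompleteSpace A] {x : A} (hx : ‖x‖ < 1) :
    IsUnit (1 - (x : Unitization ℂ A)) := by
  refine (isUnit_map_iff (WithLp.unitizationAlgEquiv ℂ).symm _).1 ?_
  rw [map_sub, map_one]
  exact isUnit_one_sub_of_norm_lt_one ((WithLp.unitization_norm_inr x).trans_lt hx)

theorem unitizationAlgEquiv_symm_one_sub_inr_mem_closure [CompleteSpace A] {x : A}
    (hx : ‖x‖ ≤ 1) :
    (WithLp.unitizationAlgEquiv ℂ).symm (1 - (x : Unitization ℂ A)) ∈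
      closure {w | IsUnit w} := by
  rw [map_sub, map_one]
  exact one_sub_mem_closure_setOf_isUnit ((WithLp.unitization_norm_inr x).trans_le hx)

theorem isUnit_one_sub_inr_of_mul_eq_one [CompleteSpace A] {x : A} (hx : ‖x‖ ≤ 1)
    {w : Unitization ℂ A} (h : w * (1 - x) = 1) : IsUnit (1 - (x : Unitization ℂ A)) :=
  (isUnit_map_iff (WithLp.unitizationAlgEquiv ℂ).symm _).1 <|
    .of_mul_eq_one_right_of_mem_closure (by rw [← map_mul, h, map_one])
      (unitizationAlgEquiv_symm_one_sub_inr_mem_closure hx)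

theorem isUnit_one_sub_inr_of_mul_eq_one_right [CompleteSpace A] {x : A} (hx : ‖x‖ ≤ 1)
    {w : Unitization ℂ A} (h : (1 - x) * w = 1) : IsUnit (1 - (x : Unitization ℂ A)) :=
  (isUnit_map_iff (WithLp.unitizationAlgEquiv ℂ).symm _).1 <|
    .of_mul_eq_one_of_mem_closure (by rw [← map_mul, h, map_one])
      (unitizationAlgEquiv_symm_one_sub_inr_mem_closure hx)

end Unitization

section QuasiInverse

theorem exists_eq_sub_mul_self_of_mul_eq_add {A : Type*} [NonUnitalRing A] {x y : A}
    (h : x * y = x + y) (b : A) : ∃ a, b = a - x * a :=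
  ⟨b - y * b, by rw [mul_sub, ← mul_assoc, h]; noncomm_ring⟩

theorem exists_eq_sub_self_mul_of_mul_eq_add {A : Type*} [NonUnitalRing A] {x y : A}
    (h : y * x = x + y) (b : A) : ∃ a, b = a - a * x :=
  ⟨b - b * y, by rw [sub_mul, mul_assoc, h]; noncomm_ring⟩

variable {A : Type*} [NonUnitalNormedRing A] [NormedSpace ℂ A] [IsScalarTower ℂ A A]
  [SMulCommClass ℂ A A] [CompleteSpace A]

open Unitization

theorem exists_right_quasi_inverse_of_exists_left {x : A} (hx : ‖x‖ ≤ 1)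
    (h : ∃ y, y * x = x + y) : ∃ y, x * y = x + y := by
  obtain ⟨w, hw⟩ := (exists_left_quasi_inverse_iff (R := ℂ) x).1 h
  exact (exists_right_quasi_inverse_iff x).2
    (isUnit_one_sub_inr_of_mul_eq_one hx hw).exists_right_inv

theorem exists_left_quasi_inverse_of_exists_right {x : A} (hx : ‖x‖ ≤ 1)
    (h : ∃ y, x * y = x + y) : ∃ y, y * x = x + y := by
  obtain ⟨w, hw⟩ := (exists_right_quasi_inverse_iff (R := ℂ) x).1 h
  exact (exists_left_quasi_inverse_iff x).2
    (isUnit_one_sub_inr_of_mul_eq_one_right hx hw).exists_left_inv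

theorem exists_right_quasi_inverse_of_mem_closure {x : A}
    (hx : x ∈ closure {z | ∃ a, z = a - x * a}) : ∃ y, x * y = x + y := by
  obtain ⟨_, ⟨a, rfl⟩, hdist⟩ := Metric.mem_closure_iff.mp hx 1 one_pos
  have hunit : IsUnit (1 - ((x - (a - x * a) : A) : Unitization ℂ A)) :=
    isUnit_one_sub_inr_of_norm_lt_one (by rwa [← dist_eq_norm])
  have hfactor : (1 - (x : Unitization ℂ A)) * (1 + a) = 1 - ↑(x - (a - x * a)) := by
    simp only [inr_sub, inr_mul, sub_mul, one_mul, mul_add, mul_one]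
    abel
  obtain ⟨v, hv⟩ := hunit.exists_right_inv
  exact (exists_right_quasi_inverse_iff x).2
    ⟨(1 + (a : Unitization ℂ A)) * v, by rw [← mul_assoc, hfactor, hv]⟩

theorem exists_left_quasi_inverse_of_mem_closure {x : A}
    (hx : x ∈ closure {z | ∃ a, z = a - a * x}) : ∃ y, y * x = x + y := by
  obtain ⟨_, ⟨a, rfl⟩, hdist⟩ := Metric.mem_closure_iff.mp hx 1 one_pos
  have hunit : IsUnit (1 - ((x - (a - a * x) : A) : Unitization ℂ A)) :=
    isUnit_one_sub_inr_of_norm_lt_one (by rwa [← dist_eq_norm])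
  have hfactor : (1 + (a : Unitization ℂ A)) * (1 - x) = 1 - ↑(x - (a - a * x)) := by
    simp only [inr_sub, inr_mul, add_mul, one_mul, mul_sub, mul_one]
    abel
  obtain ⟨v, hv⟩ := hunit.exists_left_inv
  exact (exists_left_quasi_inverse_iff x).2
    ⟨v * (1 + (a : Unitization ℂ A)), by rw [mul_assoc, hfactor, hv]⟩

end QuasiInverse

/-- In a (not necessarily unital) complex Banach algebra, for `x` with `‖x‖ ≤ 1`, left
quasi-invertibility and right quasi-invertibility of `x` are equivalent, and are equivalent
to (the closure of) either of `(1-x)A = {a - x a}` and `A(1-x) = {a - a x}` being all of `A`. -/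
theorem tfae_quasi_invertible_contractive
    {A : Type*} [NonUnitalNormedRing A] [NormedSpace ℂ A]
    [IsScalarTower ℂ A A] [SMulCommClass ℂ A A] [CompleteSpace A]
    (x : A) (hx : ‖x‖ ≤ 1) :
    List.TFAE
      [(∃ y : A, y * x = x + y),
       (∃ y : A, x * y = x + y),
       {z : A | ∃ a : A, z = a - x * a} = Set.univ,
       closure {z : A | ∃ a : A, z = a - x * a} = Set.univ,
       {z : A | ∃ a : A, z = a - a * x} = Set.univ,
       closure {z : A | ∃ a : A, z = a - a * x} = Set.univ] := by
  tfae_have 1 → 2 := exists_right_quasi_inverse_of_exists_left hx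
  tfae_have 2 → 1 := exists_left_quasi_inverse_of_exists_right hx
  tfae_have 2 → 3 := fun ⟨_, hy⟩ =>
    Set.eq_univ_of_forall (exists_eq_sub_mul_self_of_mul_eq_add hy)
  tfae_have 3 → 4 := fun h => by rw [h, closure_univ]
  tfae_have 4 → 2 := fun h => exists_right_quasi_inverse_of_mem_closure (h ▸ Set.mem_univ x)
  tfae_have 1 → 5 := fun ⟨_, hy⟩ =>
    Set.eq_univ_of_forall (exists_eq_sub_self_mul_of_mul_eq_add hy)
  tfae_have 5 → 6 := fun h => by rw [h, closure_univ]
  tfae_have 6 → 1 := fun h => exists_left_quasi_inverse_of_mem_closure (h ▸ Set.mem_univ x)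
  tfae_finish
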